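/- arXiv:0904.0333 — 2 statements merged into one kernel-verified Lean document; each statement's English description precedes it below -/
import Mathlib

section
/- If V is partitioned into a and b and M is a square matrix with all principal submatrices invertible, then partial inversion of M with respect to a equals partial inversion of M⁻¹ with respect to b: inv_a M = inv_b M⁻¹. -/
/-- Partial inversion of a square real matrix with respect to a single index `k`. -/
noncomputable def invStep {ι : Type*} [DecidableEq ι] (M : Matrix ι ι ℝ) (k : ι) : Matrix ι ι ℝ :=
  Matrix.of fun i j =>
    if i = k then (if j = k then 1 / M k k else - M k j / M k k)
    else if j = k then M i k / M k k
    else M i j - M i k * M k j / M k k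

/-- Partial inversion with respect to a sequence of indices, applied in order. -/
noncomputable def invList {ι : Type*} [DecidableEq ι] (l : List ι) (M : Matrix ι ι ℝ) : Matrix ι ι ℝ :=
  l.foldl invStep M

/-- All principal submatrices of `M` are invertible. -/
def allPrincipalInvertible {ι : Type*} [Fintype ι] [DecidableEq ι]
    (M : Matrix ι ι ℝ) : Prop :=
  ∀ s : Finset ι,
    (M.submatrix (fun i : s => (i : ι)) (fun i : s => (i : ι))).det ≠ 0

/-!
Partial inversion is characterised by an exchange property: `N = inv_S A` if and only if, whenever
`y = A x`, `N` maps `(y_S, x_{Sᶜ})` to `(x_S, y_{Sᶜ})`. One pivot step on `k ∉ S` exchanges the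
`k`-th coordinates of input and output, so `inv_S A` has this property for `S`. When all principal
minors of `M` are nonzero, the map `x ↦ (y_S, x_{Sᶜ})` is injective for every `S`; hence every
pivot met along the way is nonzero and the exchange property determines `N`. Passing from `M` to
`M⁻¹` swaps the roles of `x` and `y`, i.e. replaces `S` by `Sᶜ`, so `inv_a M` and `inv_b M⁻¹` have
the exchange property for the same pair `(M, a)` and coincide.
-/

open Matrix Finset Function

section PartialInverse

variable {ι : Type*} [Fintype ι] [DecidableEq ι]

/-- `N` is a partial inverse of `A` with respect to `S` when, for every `x` and `y = A x`, it maps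
`(y_S, x_{Sᶜ})` to `(x_S, y_{Sᶜ})`. -/
def IsPartialInverse {R : Type*} [CommRing R] (A : Matrix ι ι R) (S : Finset ι)
    (N : Matrix ι ι R) : Prop :=
  ∀ x : ι → R, N *ᵥ S.piecewise (A *ᵥ x) x = S.piecewise x (A *ᵥ x)

theorem isPartialInverse_empty {R : Type*} [CommRing R] (A : Matrix ι ι R) :
    IsPartialInverse A ∅ A := fun x => by simp only [piecewise_empty]

theorem IsPartialInverse.compl_of_inv {R : Type*} [CommRing R] {A N : Matrix ι ι R}
    {S : Finset ι} (hA : IsUnit A.det) (h : IsPartialInverse A⁻¹ S N) :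
    IsPartialInverse A Sᶜ N := fun x => by
  simpa only [piecewise_compl, mulVec_mulVec, nonsing_inv_mul _ hA, one_mulVec] using h (A *ᵥ x)

theorem invStep_mulVec_update {N : Matrix ι ι ℝ} {k : ι} (hkk : N k k ≠ 0) (p : ι → ℝ) :
    invStep N k *ᵥ update p k ((N *ᵥ p) k) = update (N *ᵥ p) k (p k) := by
  have split (Q : Matrix ι ι ℝ) (v : ι → ℝ) (i : ι) :
      (Q *ᵥ v) i = Q i k * v k + ∑ j ∈ univ.erase k, Q i j * v j :=
    (add_sum_erase _ _ (mem_univ k)).symm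
  have off_pivot (i : ι) : ∑ j ∈ univ.erase k, invStep N k i j * update p k ((N *ᵥ p) k) j =
      ∑ j ∈ univ.erase k, (if i = k then -(N k j * p j) / N k k
        else N i j * p j - N i k / N k k * (N k j * p j)) := by
    refine sum_congr rfl fun j hj => ?_
    have hjk := ne_of_mem_erase hj
    split_ifs with hik <;> simp [invStep, hik, hjk] <;> ring
  ext i
  rw [split, off_pivot, update_self]
  rcases eq_or_ne i k with rfl | hik
  · simp only [update_self, if_true, ← sum_div, sum_neg_distrib, split N p i, invStep, of_apply]
    field_simp
    ring
  · simp only [update_of_ne hik, if_neg hik, sum_sub_distrib, ← mul_sum, split N p i, split N p k,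
      invStep, of_apply, if_true]
    field_simp
    ring

theorem IsPartialInverse.invStep {A N : Matrix ι ι ℝ} {S : Finset ι} {k : ι} (hk : k ∉ S)
    (hkk : N k k ≠ 0) (h : IsPartialInverse A S N) :
    IsPartialInverse A (insert k S) (invStep N k) := fun x => by
  have := invStep_mulVec_update hkk (S.piecewise (A *ᵥ x) x)
  rwa [h x, piecewise_eq_of_notMem _ _ _ hk, piecewise_eq_of_notMem _ _ _ hk, ← piecewise_insert,
    ← piecewise_insert] at this

theorem IsPartialInverse.invList {A N : Matrix ι ι ℝ} {S : Finset ι}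
    (hpivot : ∀ T N', IsPartialInverse A T N' → ∀ k ∉ T, N' k k ≠ 0) {l : List ι} (hl : l.Nodup)
    (hdisj : Disjoint S l.toFinset) (h : IsPartialInverse A S N) :
    IsPartialInverse A (S ∪ l.toFinset) (invList l N) := by
  induction l generalizing S N with
  | nil => simpa [_root_.invList] using h
  | cons k l ih =>
    rw [List.nodup_cons] at hl
    rw [List.toFinset_cons, disjoint_insert_right] at hdisj
    have hdisj' : Disjoint (insert k S) l.toFinset :=
      disjoint_insert_left.2 ⟨List.mem_toFinset.not.2 hl.1, hdisj.2⟩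
    rw [List.toFinset_cons, union_insert, ← insert_union]
    exact ih hl.2 hdisj' (h.invStep hdisj.1 (hpivot _ _ h k hdisj.1))

end PartialInverse

section PrincipalInvertible

open scoped symmDiff

variable {ι : Type*} [Fintype ι] [DecidableEq ι] {M : Matrix ι ι ℝ}

theorem allPrincipalInvertible.det_ne_zero (hM : allPrincipalInvertible M) : M.det ≠ 0 := by
  have h := hM univ
  rwa [show M.submatrix (fun i : (univ : Finset ι) => (i : ι))
      (fun i : (univ : Finset ι) => (i : ι)) =
    M.submatrix (Equiv.subtypeUnivEquiv mem_univ) (Equiv.subtypeUnivEquiv mem_univ) from rfl,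
    det_submatrix_equiv_self] at h

noncomputable def exchangeMap (M : Matrix ι ι ℝ) (S : Finset ι) : (ι → ℝ) →ₗ[ℝ] (ι → ℝ) where
  toFun x := S.piecewise (M *ᵥ x) x
  map_add' x y := by
    ext i
    by_cases hi : i ∈ S <;> simp [hi, mulVec_add]
  map_smul' r x := by
    ext i
    by_cases hi : i ∈ S <;> simp [hi, mulVec_smul]

theorem allPrincipalInvertible.exchangeMap_injective (hM : allPrincipalInvertible M)
    (S : Finset ι) : Injective (exchangeMap M S) := by
  refine (injective_iff_map_eq_zero _).2 fun x hx => ?_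
  have hx_out (i : ι) (hi : i ∉ S) : x i = 0 := by
    simpa [exchangeMap, hi] using congrFun hx i
  have hMx_in (i : ι) (hi : i ∈ S) : (M *ᵥ x) i = 0 := by
    simpa [exchangeMap, hi] using congrFun hx i
  have hsub :
      M.submatrix (fun i : S => (i : ι)) (fun i : S => (i : ι)) *ᵥ (fun j : S => x j) = 0 := by
    ext i
    rw [Pi.zero_apply, ← hMx_in i i.2, mulVec, dotProduct, mulVec, dotProduct]
    simp only [submatrix_apply]
    rw [sum_coe_sort S fun j => M i j * x j]
    exact sum_subset (subset_univ S) fun j _ hj => by rw [hx_out j hj, mul_zero]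
  have hS : (fun j : S => x j) = 0 := eq_zero_of_mulVec_eq_zero (hM S) hsub
  ext i
  by_cases hi : i ∈ S
  · exact congrFun hS ⟨i, hi⟩
  · exact hx_out i hi

theorem allPrincipalInvertible.exchangeMap_surjective (hM : allPrincipalInvertible M)
    (S : Finset ι) : Surjective (exchangeMap M S) :=
  LinearMap.injective_iff_surjective.1 (hM.exchangeMap_injective S)

theorem IsPartialInverse.unique (hM : allPrincipalInvertible M) {S : Finset ι}
    {N N' : Matrix ι ι ℝ} (h : IsPartialInverse M S N) (h' : IsPartialInverse M S N') :
    N = N' := by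
  refine ext_of_mulVec_single fun j => ?_
  obtain ⟨x, hx⟩ := hM.exchangeMap_surjective S (Pi.single j 1)
  change S.piecewise (M *ᵥ x) x = _ at hx
  rw [← hx, h x, h' x]

theorem IsPartialInverse.diag_ne_zero (hM : allPrincipalInvertible M) {S : Finset ι}
    {N : Matrix ι ι ℝ} (h : IsPartialInverse M S N) (k : ι) : N k k ≠ 0 := by
  intro hkk
  obtain ⟨x, hx⟩ := hM.exchangeMap_surjective S (Pi.single k 1)
  change S.piecewise (M *ᵥ x) x = _ at hx
  have hcol : S.piecewise x (M *ᵥ x) k = 0 := by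
    rw [← h x, hx, mulVec_single_one]
    exact hkk
  -- toggling `k` in `S` puts the preimage `x` of `e_k` into the kernel of an injective map
  have hx0 : exchangeMap M (S ∆ {k}) x = 0 := by
    ext i
    change (S ∆ {k}).piecewise (M *ᵥ x) x i = 0
    rcases eq_or_ne i k with rfl | hik
    · by_cases hi : i ∈ S <;> simp_all [Finset.piecewise, mem_symmDiff]
    · have := congrFun hx i
      simp_all [Finset.piecewise, mem_symmDiff]
  rw [hM.exchangeMap_injective _ (hx0.trans (map_zero _).symm)] at hx
  simpa [mulVec_zero, piecewise_same] using congrFun hx k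

end PrincipalInvertible

/-- for a partition of the index set into `a` and `b`,
`inv_a M = inv_b M⁻¹`. -/
theorem invList_inv {ι : Type*} [Fintype ι] [DecidableEq ι]
    (M : Matrix ι ι ℝ) (hM : allPrincipalInvertible M)
    (la lb : List ι) (hna : la.Nodup) (hnb : lb.Nodup)
    (hdisj : Disjoint la.toFinset lb.toFinset)
    (hall : ∀ i : ι, i ∈ la ∨ i ∈ lb) :
    invList la M = invList lb M⁻¹ := by
  have hdet : IsUnit M.det := hM.det_ne_zero.isUnit
  have ha : IsPartialInverse M la.toFinset (invList la M) := by
    simpa using (isPartialInverse_empty M).invList (fun _ _ h k _ => h.diag_ne_zero hM k) hna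
      (disjoint_empty_left _)
  have hb : IsPartialInverse M⁻¹ lb.toFinset (invList lb M⁻¹) := by
    simpa using (isPartialInverse_empty M⁻¹).invList
      (fun _ _ h k _ => (h.compl_of_inv hdet).diag_ne_zero hM k) hnb (disjoint_empty_left _)
  have hcompl : lb.toFinsetᶜ = la.toFinset :=
    compl_eq_iff_isCompl.2 ⟨hdisj.symm, codisjoint_iff.2 <| by
      ext i; simpa [or_comm] using hall i⟩
  exact ha.unique hM (hcompl ▸ hb.compl_of_inv hdet)
end

section
/- Contraction for linear independencies: for a positive definite matrix Σ partitioned by disjoint sets a, b, c, d, if Π_{a|b.c} = 0 and Π_{a|d.bc} = 0 then Π_{a|bd.c} = 0. -/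
variable {n : ℕ}

/-- The submatrix (block) of `S` with rows `x` and columns `y`. -/
def blk (S : Matrix (Fin n) (Fin n) ℝ) (x y : Finset (Fin n)) : Matrix x y ℝ :=
  Matrix.of fun i j => S i j

/-- The conditional covariance block `Σ_{xy|z} = Σ_{xy} − Σ_{xz} Σ_{zz}⁻¹ Σ_{zy}`. -/
noncomputable def condCov (S : Matrix (Fin n) (Fin n) ℝ) (x y z : Finset (Fin n)) :
    Matrix x y ℝ :=
  blk S x y - blk S x z * (blk S z z)⁻¹ * blk S z y

/-- The partial regression coefficient matrix `Π_{x|y.z} = Σ_{xy|z} Σ_{yy|z}⁻¹`. -/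
noncomputable def regCoef (S : Matrix (Fin n) (Fin n) ℝ) (x y z : Finset (Fin n)) :
    Matrix x y ℝ :=
  condCov S x y z * (condCov S y y z)⁻¹

/-!
The vanishing regression coefficients say Σ_{ab|c} = 0 and Σ_{ad|bc} = 0, because Σ_{bb|c} and
Σ_{dd|bc} are Schur complements inside the positive definite Σ, hence invertible. The block
inversion formula gives the stepwise conditioning identity
Σ_{ad|bc} = Σ_{ad|c} − Σ_{ab|c} Σ_{bb|c}⁻¹ Σ_{bd|c}, so Σ_{ad|c} = 0 as well. Thus
Σ_{a,b∪d|c} = 0, and with it Π_{a|bd.c}.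
-/

open Matrix

theorem Matrix.fromCols_mul_inv_fromBlocks_mul_fromRows {l m k o α : Type*}
    [Fintype m] [Fintype k] [DecidableEq m] [DecidableEq k] [CommRing α]
    (P : Matrix l m α) (Q : Matrix l k α) (A : Matrix m m α) (B : Matrix m k α)
    (C : Matrix k m α) (D : Matrix k k α) (U : Matrix m o α) (V : Matrix k o α)
    (hD : IsUnit D.det) (hSchur : IsUnit (A - B * D⁻¹ * C).det) :
    fromCols P Q * (fromBlocks A B C D)⁻¹ * fromRows U V =
      Q * D⁻¹ * V + (P - Q * D⁻¹ * C) * (A - B * D⁻¹ * C)⁻¹ * (U - B * D⁻¹ * V) := by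
  let := D.invertibleOfIsUnitDet hD
  let := (A - B * ⅟D * C).invertibleOfIsUnitDet (by rwa [invOf_eq_nonsing_inv])
  let := fromBlocks₂₂Invertible A B C D
  rw [← invOf_eq_nonsing_inv (fromBlocks A B C D), invOf_fromBlocks₂₂_eq,
    fromCols_mul_fromBlocks, fromCols_mul_fromRows]
  simp only [invOf_eq_nonsing_inv, Matrix.mul_sub, Matrix.sub_mul, Matrix.mul_add,
    Matrix.add_mul, Matrix.mul_neg, Matrix.neg_mul, Matrix.mul_assoc]
  abel

section Blocks

variable {S : Matrix (Fin n) (Fin n) ℝ} {x y b c : Finset (Fin n)}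

theorem blk_union_right_submatrix (hbc : Disjoint b c) :
    (blk S x (b ∪ c)).submatrix id (Equiv.Finset.union b c hbc) =
      fromCols (blk S x b) (blk S x c) := by
  ext i (j | j) <;> rfl

theorem blk_union_left_submatrix (hbc : Disjoint b c) :
    (blk S (b ∪ c) y).submatrix (Equiv.Finset.union b c hbc) id =
      fromRows (blk S b y) (blk S c y) := by
  ext (i | i) j <;> rfl

theorem blk_union_submatrix (hbc : Disjoint b c) :
    (blk S (b ∪ c) (b ∪ c)).submatrix (Equiv.Finset.union b c hbc)
        (Equiv.Finset.union b c hbc) =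
      fromBlocks (blk S b b) (blk S b c) (blk S c b) (blk S c c) := by
  ext (i | i) (j | j) <;> rfl

theorem blk_posDef (hS : S.PosDef) (x : Finset (Fin n)) : (blk S x x).PosDef :=
  hS.submatrix Subtype.coe_injective

theorem isUnit_det_condCov (hS : S.PosDef) (hyc : Disjoint y c) :
    IsUnit (condCov S y y c).det := by
  have hM : (fromBlocks (blk S y y) (blk S y c) (blk S c y) (blk S c c)).PosDef :=
    blk_union_submatrix hyc ▸
      (blk_posDef hS (y ∪ c)).submatrix (Equiv.Finset.union y c hyc).injective
  let := (blk S c c).invertibleOfIsUnitDet (blk_posDef hS c).det_pos.ne'.isUnit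
  have h := (isUnit_iff_isUnit_det _).mp hM.isUnit
  rw [det_fromBlocks₂₂, invOf_eq_nonsing_inv] at h
  exact isUnit_of_mul_isUnit_right h

theorem condCov_eq_zero_of_regCoef_eq_zero (hS : S.PosDef) (hyc : Disjoint y c)
    (h : regCoef S x y c = 0) : condCov S x y c = 0 :=
  calc condCov S x y c = regCoef S x y c * condCov S y y c :=
        (nonsing_inv_mul_cancel_right _ _ (isUnit_det_condCov hS hyc)).symm
    _ = 0 := by rw [h, Matrix.zero_mul]

theorem condCov_union (hS : S.PosDef) (hbc : Disjoint b c) :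
    condCov S x y (b ∪ c) =
      condCov S x y c - condCov S x b c * (condCov S b b c)⁻¹ * condCov S b y c := by
  have hreindex : blk S x (b ∪ c) * (blk S (b ∪ c) (b ∪ c))⁻¹ * blk S (b ∪ c) y =
      fromCols (blk S x b) (blk S x c) *
        (fromBlocks (blk S b b) (blk S b c) (blk S c b) (blk S c c))⁻¹ *
        fromRows (blk S b y) (blk S c y) := by
    rw [← blk_union_right_submatrix hbc, ← blk_union_submatrix hbc,
      ← blk_union_left_submatrix hbc, inv_submatrix_equiv, submatrix_mul_equiv,
      submatrix_mul_equiv, submatrix_id_id]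
  rw [condCov, hreindex, fromCols_mul_inv_fromBlocks_mul_fromRows _ _ _ _ _ _ _ _
    (blk_posDef hS c).det_pos.ne'.isUnit (isUnit_det_condCov hS hbc)]
  simp only [condCov]
  abel

theorem condCov_union_right_eq_zero {w : Finset (Fin n)} (hy : condCov S x y c = 0)
    (hw : condCov S x w c = 0) : condCov S x (y ∪ w) c = 0 := by
  ext i ⟨j, hj⟩
  rcases Finset.mem_union.mp hj with hj | hj
  · simpa [condCov, blk, Matrix.mul_apply] using congrFun (congrFun hy i) ⟨j, hj⟩
  · simpa [condCov, blk, Matrix.mul_apply] using congrFun (congrFun hw i) ⟨j, hj⟩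

end Blocks

theorem regCoef_contraction_general (S : Matrix (Fin n) (Fin n) ℝ) (hS : S.PosDef)
    (a b c d : Finset (Fin n))
    (hbc : Disjoint b c) (hbd : Disjoint b d) (hcd : Disjoint c d)
    (h1 : regCoef S a b c = 0) (h2 : regCoef S a d (b ∪ c) = 0) :
    regCoef S a (b ∪ d) c = 0 := by
  have hab : condCov S a b c = 0 := condCov_eq_zero_of_regCoef_eq_zero hS hbc h1
  have hdbc : Disjoint d (b ∪ c) := Finset.disjoint_union_right.mpr ⟨hbd.symm, hcd.symm⟩
  have had_bc : condCov S a d (b ∪ c) = 0 := condCov_eq_zero_of_regCoef_eq_zero hS hdbc h2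
  have had : condCov S a d c = 0 := by
    simpa [condCov_union hS hbc, hab] using had_bc
  rw [regCoef, condCov_union_right_eq_zero hab had, Matrix.zero_mul]

/-- contraction, `Π_{a|b.c} = 0` and `Π_{a|d.bc} = 0` imply
`Π_{a|bd.c} = 0`. -/
theorem regCoef_contraction (S : Matrix (Fin n) (Fin n) ℝ) (hS : S.PosDef)
    (a b c d : Finset (Fin n))
    (hab : Disjoint a b) (hac : Disjoint a c) (had : Disjoint a d)
    (hbc : Disjoint b c) (hbd : Disjoint b d) (hcd : Disjoint c d)
    (h1 : regCoef S a b c = 0) (h2 : regCoef S a d (b ∪ c) = 0) :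
    regCoef S a (b ∪ d) c = 0 :=
  regCoef_contraction_general S hS a b c d hbc hbd hcd h1 h2
end
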